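/- The unit β gauges the Maurer–Cartan element x to β·x·t: one has the identity β·(D + x) = (D + β·x·t)·β in R. -/

import Mathlib

/-!
Write `a = 1 + x s`. The Maurer–Cartan equation together with `D² = 0` gives
`D x + x D + x² = 0`, and with `D s + s D = 1 - t` this yields the intertwining relation
`(D + x) a = a D + x t`; conjugating by `β = a⁻¹` gives the claim. Here `a` is a unit because
`1 + s x` is, with inverse `1 - x (1 + s x)⁻¹ s` (Jacobson's lemma).
-/

theorem isUnit_one_add_mul_swap {R : Type*} [Ring R] {a b : R} (h : IsUnit (1 + a * b)) :
    IsUnit (1 + b * a) := by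
  obtain ⟨u, hu⟩ := h
  refine ⟨⟨1 + b * a, 1 - b * ↑u⁻¹ * a, ?_, ?_⟩, rfl⟩
  · calc (1 + b * a) * (1 - b * ↑u⁻¹ * a)
          = 1 + b * a - b * ((1 + a * b) * ↑u⁻¹) * a := by noncomm_ring
      _ = 1 := by rw [← hu, Units.mul_inv]; noncomm_ring
  · calc (1 - b * ↑u⁻¹ * a) * (1 + b * a)
          = 1 + b * a - b * (↑u⁻¹ * (1 + a * b)) * a := by noncomm_ring
      _ = 1 := by rw [← hu, Units.inv_mul]; noncomm_ring

theorem Ring.inverse_mul_eq_of_mul_eq {R : Type*} [Ring R] {a A B y : R} (ha : IsUnit a)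
    (h : A * a = a * B + y) : Ring.inverse a * A = (B + Ring.inverse a * y) * Ring.inverse a :=
  calc Ring.inverse a * A = Ring.inverse a * (A * a) * Ring.inverse a := by
        rw [mul_assoc, mul_assoc, Ring.mul_inverse_cancel a ha, mul_one]
    _ = Ring.inverse a * a * B * Ring.inverse a + Ring.inverse a * y * Ring.inverse a := by
        rw [h]; noncomm_ring
    _ = (B + Ring.inverse a * y) * Ring.inverse a := by
        rw [Ring.inverse_mul_cancel a ha, one_mul, add_mul]

theorem add_mul_one_add_mul_eq {R : Type*} [Ring R] {s t x D : R} (hDD : D * D = 0)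
    (hDs : D * s + s * D = 1 - t) (hMC : (D + x) * (D + x) = 0) :
    (D + x) * (1 + x * s) = (1 + x * s) * D + x * t := by
  have hDx : D * x + x * D + x * x = 0 :=
    calc D * x + x * D + x * x = (D + x) * (D + x) - D * D := by noncomm_ring
      _ = 0 := by rw [hMC, hDD, sub_zero]
  calc (D + x) * (1 + x * s)
      = D + x + (D * x + x * D + x * x) * s - x * (D * s + s * D) + x * s * D := by noncomm_ring
    _ = (1 + x * s) * D + x * t := by rw [hDx, hDs]; noncomm_ring

theorem beta_gauges_x_general {R : Type*} [Ring R] (s t x D : R)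
    (hu : IsUnit (1 + s * x))
    (hDD : D * D = 0) (hDs : D * s + s * D = 1 - t)
    (hMC : (D + x) * (D + x) = 0) :
    let β := Ring.inverse (1 + x * s)
    β * (D + x) = (D + β * x * t) * β := by
  intro β
  rw [mul_assoc β]
  exact Ring.inverse_mul_eq_of_mul_eq (isUnit_one_add_mul_swap hu)
    (add_mul_one_add_mul_eq hDD hDs hMC)

/-- The unit `β` gauges the Maurer–Cartan element `x` to `β x t`:
`β (D + x) = (D + β x t) β`. -/
theorem beta_gauges_x {R : Type*} [Ring R] (s t x D : R)
    (hss : s * s = 0) (hst : s * t = 0) (hts : t * s = 0) (htt : t * t = t)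
    (hu : IsUnit (1 + s * x))
    (hDD : D * D = 0) (hDs : D * s + s * D = 1 - t) (hDt : D * t = t * D)
    (hMC : (D + x) * (D + x) = 0) :
    let β := Ring.inverse (1 + x * s)
    β * (D + x) = (D + β * x * t) * β :=
  beta_gauges_x_general s t x D hu hDD hDs hMC
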